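/- arXiv:1602.08845 — 5 statements merged into one kernel-verified Lean document; each statement's English description precedes it below -/
import Mathlib

section
/- Let N ≥ 1, let s : Fin N → Finset ℕ assign page-request sets to a fixed sequence of vectors, and let M be a memory budget with |s i| ≤ M for every i. Call a partition of the index range {0, …, N−1} into consecutive nonempty intervals (batches) feasible if for every batch B the union ⋃_{i ∈ B} s i has cardinality at most M. Then the greedy partition — which starts a batch at the first index and repeatedly extends the current batch by the next index as long as the union of page-request sets of the batch has cardinality at most M, starting a new batch otherwise — is feasible and uses the minimum possible number of batches among all feasible partitions. -/
/-- Pages accessed by the (consecutive) batch of vectors with indices in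
`[a, b)`: the union of the page-request sets of its vectors. -/
def batchPages {N : ℕ} (s : Fin N → Finset ℕ) (a b : ℕ) : Finset ℕ :=
  (Finset.univ.filter (fun i : Fin N => a ≤ (i : ℕ) ∧ (i : ℕ) < b)).biUnion s

/-- `bnd : Fin (k+1) → ℕ` is the boundary sequence of a feasible partition of
`{0, …, N-1}` into `k` consecutive nonempty batches: boundaries start at `0`,
end at `N`, strictly increase (so batches are nonempty), and every batch
accesses at most `M` pages. -/
def IsFeasiblePartition {N : ℕ} (s : Fin N → Finset ℕ) (M : ℕ) (k : ℕ)
    (bnd : Fin (k + 1) → ℕ) : Prop :=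
  bnd 0 = 0 ∧ bnd (Fin.last k) = N ∧ StrictMono bnd ∧
    ∀ t : Fin k, (batchPages s (bnd t.castSucc) (bnd t.succ)).card ≤ M

/-- Greedy extension: starting a batch at index `a`, extend it maximally, i.e.
take the largest `b ≤ N` with `a < b` such that the batch `[a, b)` accesses at
most `M` pages. -/
noncomputable def greedyNext {N : ℕ} (s : Fin N → Finset ℕ) (M : ℕ) (a : ℕ) : ℕ :=
  sSup {b : ℕ | a < b ∧ b ≤ N ∧ (batchPages s a b).card ≤ M}

/-- Boundaries produced by the greedy algorithm: start at `0` and repeatedly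
extend the current batch maximally subject to the memory budget `M`. -/
noncomputable def greedyBnd {N : ℕ} (s : Fin N → Finset ℕ) (M : ℕ) : ℕ → ℕ
  | 0 => 0
  | t + 1 =>
      if greedyBnd s M t < N then greedyNext s M (greedyBnd s M t) else N

lemma batchPages_mono {N : ℕ} (s : Fin N → Finset ℕ) {a a' b b' : ℕ}
    (ha : a' ≤ a) (hb : b ≤ b') : batchPages s a b ⊆ batchPages s a' b' := by
  intro x hx
  simp only [batchPages, Finset.mem_biUnion, Finset.mem_filter, Finset.mem_univ, true_and] at hx ⊢
  obtain ⟨i, ⟨h1, h2⟩, h3⟩ := hx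
  exact ⟨i, ⟨ha.trans h1, h2.trans_le hb⟩, h3⟩

lemma greedySet_bdd {N : ℕ} (s : Fin N → Finset ℕ) (M a : ℕ) :
    BddAbove {b : ℕ | a < b ∧ b ≤ N ∧ (batchPages s a b).card ≤ M} :=
  ⟨N, fun _ hb => hb.2.1⟩

lemma greedySet_nonempty {N : ℕ} (s : Fin N → Finset ℕ) {M a : ℕ}
    (hs : ∀ i, (s i).card ≤ M) (ha : a < N) :
    ({b : ℕ | a < b ∧ b ≤ N ∧ (batchPages s a b).card ≤ M}).Nonempty := by
  refine ⟨a + 1, Nat.lt_succ_self a, ha, ?_⟩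
  have hsub : batchPages s a (a + 1) ⊆ s ⟨a, ha⟩ := by
    intro x hx
    simp only [batchPages, Finset.mem_biUnion, Finset.mem_filter, Finset.mem_univ, true_and] at hx
    obtain ⟨i, ⟨h1, h2⟩, h3⟩ := hx
    have : (i : ℕ) = a := le_antisymm (Nat.lt_succ_iff.mp h2) h1
    have : i = ⟨a, ha⟩ := Fin.ext this
    rwa [this] at h3
  exact le_trans (Finset.card_le_card hsub) (hs _)

lemma greedyNext_mem {N : ℕ} (s : Fin N → Finset ℕ) {M a : ℕ}
    (hs : ∀ i, (s i).card ≤ M) (ha : a < N) :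
    greedyNext s M a ∈ {b : ℕ | a < b ∧ b ≤ N ∧ (batchPages s a b).card ≤ M} :=
  Nat.sSup_mem (greedySet_nonempty s hs ha) (greedySet_bdd s M a)

lemma greedyBnd_le {N : ℕ} (s : Fin N → Finset ℕ) (M : ℕ)
    (hs : ∀ i, (s i).card ≤ M) : ∀ t, greedyBnd s M t ≤ N := by
  intro t
  induction t with
  | zero => exact Nat.zero_le N
  | succ t ih =>
    simp only [greedyBnd]
    split
    · exact (greedyNext_mem s hs (by assumption)).2.1
    · exact le_rfl

lemma greedyBnd_lt_succ {N : ℕ} (s : Fin N → Finset ℕ) {M : ℕ}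
    (hs : ∀ i, (s i).card ≤ M) {t : ℕ} (ht : greedyBnd s M t < N) :
    greedyBnd s M t < greedyBnd s M (t + 1) := by
  simp only [greedyBnd, if_pos ht]
  exact (greedyNext_mem s hs ht).1

lemma greedyBnd_reaches {N : ℕ} (s : Fin N → Finset ℕ) (M : ℕ)
    (hs : ∀ i, (s i).card ≤ M) : ∃ t, greedyBnd s M t = N := by
  refine ⟨N, le_antisymm (greedyBnd_le s M hs N) ?_⟩
  have key : ∀ t, min t N ≤ greedyBnd s M t := by
    intro t
    induction t with
    | zero => simp [greedyBnd]
    | succ t ih =>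
      rcases lt_or_ge (greedyBnd s M t) N with h | h
      · have h1 := greedyBnd_lt_succ s hs h
        have := lt_of_le_of_lt ih h1
        omega
      · have heq : greedyBnd s M t = N := le_antisymm (greedyBnd_le s M hs t) h
        simp only [greedyBnd, heq, lt_irrefl, if_false]
        omega
  have := key N
  simpa using this

/-- The greedy partition is feasible and uses the minimum possible number of
batches among all feasible consecutive partitions. -/
theorem greedy_batching_optimal {N M : ℕ} (hN : 1 ≤ N)
    (s : Fin N → Finset ℕ) (hs : ∀ i, (s i).card ≤ M) :
    ∃ k : ℕ, greedyBnd s M k = N ∧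
      IsFeasiblePartition s M k (fun t : Fin (k + 1) => greedyBnd s M t) ∧
      ∀ (k' : ℕ) (bnd : Fin (k' + 1) → ℕ),
        IsFeasiblePartition s M k' bnd → k ≤ k' := by
  have hex := greedyBnd_reaches s M hs
  set k := Nat.find hex with hk
  have hkN : greedyBnd s M k = N := Nat.find_spec hex
  have hlt : ∀ t < k, greedyBnd s M t < N := fun t ht =>
    lt_of_le_of_ne (greedyBnd_le s M hs t) (Nat.find_min hex ht)
  refine ⟨k, hkN, ⟨rfl, ?_, ?_, ?_⟩, ?_⟩
  · simpa [Fin.last] using hkN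
  · rw [Fin.strictMono_iff_lt_succ]
    intro i
    simp only [Fin.coe_castSucc, Fin.val_succ]
    exact greedyBnd_lt_succ s hs (hlt i i.isLt)
  · intro t
    simp only [Fin.coe_castSucc, Fin.val_succ]
    have h := hlt t t.isLt
    have : greedyBnd s M ((t : ℕ) + 1) = greedyNext s M (greedyBnd s M t) := by
      simp [greedyBnd, if_pos h]
    rw [this]
    exact (greedyNext_mem s hs h).2.2
  · intro k' bnd ⟨h0, hlast, hmono, hcard⟩
    have hbndN : ∀ t : Fin (k' + 1), bnd t ≤ N := fun t => by
      rw [← hlast]; exact hmono.monotone (Fin.le_last t)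
    have key : ∀ t : ℕ, (ht : t ≤ k') → bnd ⟨t, Nat.lt_succ_of_le ht⟩ ≤ greedyBnd s M t := by
      intro t
      induction t with
      | zero => intro _; exact le_of_eq h0
      | succ t ih =>
        intro ht
        have ht' : t ≤ k' := le_of_lt ht
        have IH := ih ht'
        set a := greedyBnd s M t with ha
        rcases lt_or_ge a N with haN | haN
        · have hstep : greedyBnd s M (t + 1) = greedyNext s M a := by
            simp [greedyBnd, ← ha, if_pos haN]
          rw [hstep]
          set b := bnd ⟨t + 1, Nat.lt_succ_of_le ht⟩ with hb
          rcases le_or_gt b a with hba | hab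
          · exact le_trans hba (le_of_lt (greedyNext_mem s hs haN).1)
          · have hsub : batchPages s a b ⊆
                batchPages s (bnd ⟨t, Nat.lt_succ_of_le ht'⟩) b :=
              batchPages_mono s IH le_rfl
            have hcard' : (batchPages s a b).card ≤ M := by
              refine le_trans (Finset.card_le_card hsub) ?_
              have := hcard ⟨t, ht⟩
              simpa [Fin.castSucc, Fin.succ] using this
            exact le_csSup (greedySet_bdd s M a) ⟨hab, hbndN _, hcard'⟩
        · have heq : a = N := le_antisymm (greedyBnd_le s M hs t) haN
          have : greedyBnd s M (t + 1) = N := by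
            simp [greedyBnd, ← ha, heq]
          rw [this]
          exact hbndN _
    have hfin : greedyBnd s M k' = N := by
      have h1 := key k' le_rfl
      have h2 : bnd ⟨k', Nat.lt_succ_self k'⟩ = N := by
        simpa [Fin.last] using hlast
      have := greedyBnd_le s M hs k'
      omega
    exact Nat.find_min' hex hfin
end

section
/- Let l be a finite list of Boolean vectors u : Fin d → Bool, sorted in lexicographic order with coordinate 0 most significant. For each coordinate k < d, the set of positions in l at which coordinate k equals true decomposes into at most min(2^k, f_k) maximal runs of consecutive positions, where f_k is the number of vectors in l whose coordinate k equals true; in particular, for k = 0 the positions with coordinate 0 true form a single contiguous block. -/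
/-- Lexicographic (non-strict) order on Boolean vectors `Fin d → Bool`, with
coordinate `0` most significant (`false < true` on `Bool`). -/
def lexLe {d : ℕ} (u v : Fin d → Bool) : Prop :=
  u = v ∨ ∃ i : Fin d, (∀ j : Fin d, j < i → u j = v j) ∧ u i < v i

/-- Number of maximal runs of consecutive `true`s in a Boolean list. -/
def trueRunCount : List Bool → ℕ
  | [] => 0
  | false :: rest => trueRunCount rest
  | [true] => 1
  | true :: b :: rest => (if b then 0 else 1) + trueRunCount (b :: rest)

/-! Along a lexicographically sorted list, the truncations of the vectors to their first `k`
coordinates, ordered lexicographically, never decrease, and they strictly increase wherever a run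
of `true`s in coordinate `k` ends, since the two vectors there must already differ at a coordinate
before `k`. A potential taking `2 ^ k` values that increases at the end of every run allows at
most `2 ^ k` runs; the bound by `f_k` holds because every run contains a `true`. -/

theorem trueRunCount_cons_cons (x y : Bool) (rest : List Bool) :
    trueRunCount (x :: y :: rest) = (if x && !y then 1 else 0) + trueRunCount (y :: rest) := by
  cases x <;> cases y <;> simp [trueRunCount]

theorem trueRunCount_le_count_true (bs : List Bool) : trueRunCount bs ≤ bs.count true := by
  induction bs using trueRunCount.induct with
  | case1 | case3 => rfl
  | case2 rest ih => simpa [trueRunCount] using ih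
  | case4 b rest ih => cases b <;> simp [trueRunCount] at * <;> omega

section Potential

variable {α : Type*} {r : α → α → Prop} (p : α → Bool)

theorem trueRunCount_map_cons_add_le (f : α → ℕ) {M : ℕ}
    (hmono : ∀ a b, r a b → f a ≤ f b)
    (hstrict : ∀ a b, r a b → p a = true → p b = false → f a < f b) :
    ∀ (l : List α) (a : α), (a :: l).IsChain r → (∀ x ∈ a :: l, f x < M) →
      trueRunCount ((a :: l).map p) + f a ≤ M
  | [], a, _, hM => by
    have := hM a List.mem_cons_self
    simp only [List.map_cons, List.map_nil]
    cases p a <;> simp only [trueRunCount] <;> omega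
  | b :: l, a, hchain, hM => by
    obtain ⟨hab, hchain⟩ := List.isChain_cons_cons.mp hchain
    have ih := trueRunCount_map_cons_add_le f hmono hstrict l b hchain
      fun x hx => hM x (List.mem_cons_of_mem a hx)
    rw [List.map_cons, List.map_cons, trueRunCount_cons_cons, ← List.map_cons]
    split_ifs with hend
    · simp only [Bool.and_eq_true, Bool.not_eq_true'] at hend
      have := hstrict a b hab hend.1 hend.2
      omega
    · have := hmono a b hab
      omega

theorem trueRunCount_map_le_card {β : Type*} [LinearOrder β] [Fintype β] (f : α → β)
    (hmono : ∀ a b, r a b → f a ≤ f b)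
    (hstrict : ∀ a b, r a b → p a = true → p b = false → f a < f b)
    {l : List α} (hl : l.IsChain r) :
    trueRunCount (l.map p) ≤ Fintype.card β := by
  cases l with
  | nil => exact Nat.zero_le _
  | cons a l =>
    let rank : β ≃o Fin (Fintype.card β) := (Fintype.orderIsoFinOfCardEq β rfl).symm
    refine le_trans (Nat.le_add_right _ (rank (f a))) ?_
    exact trueRunCount_map_cons_add_le p (fun x => rank (f x))
      (fun a b h => rank.le_iff_le.mpr (hmono a b h))
      (fun a b h ha hb => rank.lt_iff_lt.mpr (hstrict a b h ha hb)) l a hl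
      fun x _ => (rank (f x)).isLt

end Potential

section LexTrunc

variable {d : ℕ}

def lexTrunc (k : ℕ) (hk : k ≤ d) (u : Fin d → Bool) : Lex (Fin k → Bool) :=
  toLex fun i => u (Fin.castLE hk i)

theorem lexTrunc_le_of_lexLe {k : ℕ} (hk : k ≤ d) {u v : Fin d → Bool} (h : lexLe u v) :
    lexTrunc k hk u ≤ lexTrunc k hk v := by
  rcases h with rfl | ⟨i, hagree, hlt⟩
  · exact le_rfl
  by_cases hi : (i : ℕ) < k
  · exact le_of_lt ⟨⟨i, hi⟩, fun j hj => hagree _ hj, hlt⟩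
  · refine le_of_eq (congrArg toLex (funext fun j => hagree _ ?_))
    simp only [Fin.lt_def, Fin.val_castLE]
    omega

theorem lexTrunc_lt_of_lexLe (k : Fin d) {u v : Fin d → Bool} (h : lexLe u v)
    (hu : u k = true) (hv : v k = false) :
    lexTrunc k k.isLt.le u < lexTrunc k k.isLt.le v := by
  rcases h with rfl | ⟨i, hagree, hlt⟩
  · simp [hu] at hv
  obtain hik | rfl | hki := lt_trichotomy i k
  · exact ⟨⟨i, hik⟩, fun j hj => hagree _ hj, hlt⟩
  · exact absurd (hu ▸ hv ▸ hlt) (by decide)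
  · simpa [hu, hv] using hagree k hki

end LexTrunc

/-- In a list of Boolean vectors sorted lexicographically with coordinate `0`
most significant, for each coordinate `k` the positions where coordinate `k`
is `true` form at most `min (2^k) f_k` maximal runs of consecutive positions,
where `f_k` is the number of vectors whose coordinate `k` is `true`; in
particular, for `k = 0` they form a single contiguous block. -/
theorem radix_sorted_true_runs {d : ℕ} (l : List (Fin d → Bool))
    (hl : l.Pairwise lexLe) (k : Fin d) :
    trueRunCount (l.map (fun u => u k)) ≤
      min (2 ^ (k : ℕ)) ((l.map (fun u => u k)).count true) ∧
    ((k : ℕ) = 0 → trueRunCount (l.map (fun u => u k)) ≤ 1) := by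
  have hpow : trueRunCount (l.map (fun u => u k)) ≤ 2 ^ (k : ℕ) := by
    calc trueRunCount (l.map (fun u => u k))
        ≤ Fintype.card (Lex (Fin k → Bool)) :=
          trueRunCount_map_le_card _ (lexTrunc k k.isLt.le)
            (fun _ _ => lexTrunc_le_of_lexLe _) (fun _ _ => lexTrunc_lt_of_lexLe k) hl.isChain
      _ = 2 ^ (k : ℕ) := by simp
  refine ⟨le_min hpow (trueRunCount_le_count_true _), fun hk => ?_⟩
  simpa [hk] using hpow
end

section
/- Let n ≥ 1 and let A, B ⊆ Fin n be nonempty finite sets. If π is a permutation of Fin n chosen uniformly at random from all n! permutations, then the probability that min_{a ∈ A} π(a) = min_{b ∈ B} π(b) equals the Jaccard coefficient J(A,B) = |A ∩ B| / |A ∪ B|. -/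
/-!
Let `U = A ∪ B` and let `x` be the element of `U` that `π` sends lowest. The two minima agree
exactly when `x ∈ A ∩ B`. Precomposing `π` with the transposition `(x y)` of two elements of `U`
moves this first element from `x` to `y`, so it is uniformly distributed on `U`, and it lies in
`A ∩ B` with probability `|A ∩ B| / |U|`.
-/

open Finset

theorem Finset.min'_eq_min'_iff_min'_union_mem_inter {β : Type*} [LinearOrder β]
    {s t : Finset β} (hs : s.Nonempty) (ht : t.Nonempty) :
    s.min' hs = t.min' ht ↔ (s ∪ t).min' (hs.mono subset_union_left) ∈ s ∩ t := by
  rw [min'_union hs ht, mem_inter]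
  constructor
  · intro h
    rw [h, min_self]
    exact ⟨h ▸ s.min'_mem hs, t.min'_mem ht⟩
  · rintro ⟨hmin_s, hmin_t⟩
    rcases le_total (s.min' hs) (t.min' ht) with hle | hle
    · rw [min_eq_left hle] at hmin_t
      exact le_antisymm hle (t.min'_le _ hmin_t)
    · rw [min_eq_right hle] at hmin_s
      exact le_antisymm (s.min'_le _ hmin_s) hle

theorem Finset.card_mul_card_filter_mem_eq_of_card_fiber_eq {ι α : Type*} [DecidableEq α]
    {s : Finset ι} {f : ι → α} {U S : Finset α} (hf : Set.MapsTo f s U)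
    (hfiber : ∀ x ∈ U, ∀ y ∈ U, #{i ∈ s | f i = x} = #{i ∈ s | f i = y}) (hSU : S ⊆ U) :
    #U * #{i ∈ s | f i ∈ S} = #S * #s := by
  rcases U.eq_empty_or_nonempty with rfl | ⟨x₀, hx₀⟩
  · simp [subset_empty.1 hSU]
  have hS : #{i ∈ s | f i ∈ S} = #S * #{i ∈ s | f i = x₀} := by
    rw [← sum_card_fiberwise_eq_card_filter,
      sum_congr rfl fun x hx => hfiber x (hSU hx) x₀ hx₀, sum_const, smul_eq_mul]
  have hs : #s = #U * #{i ∈ s | f i = x₀} := by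
    rw [card_eq_sum_card_fiberwise hf,
      sum_congr rfl fun x hx => hfiber x hx x₀ hx₀, sum_const, smul_eq_mul]
  rw [hS, hs]
  ring

namespace Equiv.Perm

variable {α : Type*} [LinearOrder α] {U : Finset α} (hU : U.Nonempty)

def firstIn (π : Perm α) : α :=
  π.symm ((U.image π).min' (hU.image π))

theorem apply_firstIn (π : Perm α) : π (firstIn hU π) = (U.image π).min' (hU.image π) :=
  π.apply_symm_apply _

theorem firstIn_mem (π : Perm α) : firstIn hU π ∈ U := by
  rw [← π.injective.mem_finset_image, apply_firstIn]
  exact min'_mem _ _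

theorem firstIn_mul_of_image_eq {σ : Perm α} (hσ : U.image σ = U) (π : Perm α) :
    firstIn hU (π * σ) = σ⁻¹ (firstIn hU π) := by
  have himage : U.image ⇑(π * σ) = U.image π := by
    rw [coe_mul, ← image_image, hσ]
  apply (π * σ).injective
  simp only [apply_firstIn, himage, mul_apply, coe_inv, apply_symm_apply]

theorem card_filter_firstIn_eq [Fintype α] {x y : α} (hx : x ∈ U) (hy : y ∈ U) :
    #{π | firstIn hU π = x} = #{π | firstIn hU π = y} := by
  have hswap : U.image (swap x y) = U := by
    refine eq_of_subset_of_card_le (fun z hz => ?_)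
      (card_image_of_injective _ (swap x y).injective).ge
    obtain ⟨w, hw, rfl⟩ := mem_image.1 hz
    rw [swap_apply_def]
    split_ifs <;> assumption
  have hmul (π : Perm α) : firstIn hU (π * swap x y) = swap x y (firstIn hU π) := by
    rw [firstIn_mul_of_image_eq hU hswap, swap_inv]
  have hinv (π : Perm α) : π * swap x y * swap x y = π := by
    rw [mul_assoc, swap_mul_self, mul_one]
  refine card_nbij' (· * swap x y) (· * swap x y) (fun π hπ => ?_) (fun π hπ => ?_)
    (fun π _ => hinv π) (fun π _ => hinv π)
  · rw [mem_coe, mem_filter_univ] at hπ ⊢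
    rw [hmul, hπ, swap_apply_left]
  · rw [mem_coe, mem_filter_univ] at hπ ⊢
    rw [hmul, hπ, swap_apply_right]

end Equiv.Perm

open Equiv.Perm in
theorem minhash_collision_prob_eq_jaccard_general {n : ℕ}
    (A B : Finset (Fin n)) (hA : A.Nonempty) (hB : B.Nonempty) :
    ((Finset.univ.filter (fun π : Equiv.Perm (Fin n) =>
        (A.image π).min' (hA.image π) = (B.image π).min' (hB.image π))).card : ℚ) /
      (Nat.factorial n : ℚ)
    = ((A ∩ B).card : ℚ) / ((A ∪ B).card : ℚ) := by
  have hU : (A ∪ B).Nonempty := hA.mono subset_union_left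
  have hcollision (π : Equiv.Perm (Fin n)) :
      (A.image π).min' (hA.image π) = (B.image π).min' (hB.image π) ↔
        firstIn hU π ∈ A ∩ B := by
    rw [min'_eq_min'_iff_min'_union_mem_inter, ← image_inter _ _ π.injective,
      ← π.injective.mem_finset_image (s := A ∩ B), apply_firstIn]
    simp only [image_union]
  have hcount : #(A ∪ B) * #{π | firstIn hU π ∈ A ∩ B} = #(A ∩ B) * n.factorial := by
    rw [card_mul_card_filter_mem_eq_of_card_fiber_eq (fun π _ => firstIn_mem hU π)
      (fun x hx y hy => card_filter_firstIn_eq hU hx hy) inter_subset_union,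
      card_univ, Fintype.card_perm, Fintype.card_fin]
  simp only [hcollision]
  rw [div_eq_div_iff (by positivity) (by exact_mod_cast hU.card_pos.ne'), mul_comm]
  exact_mod_cast hcount

/-- For a uniformly random permutation `π` of `Fin n` (chosen among all `n!`
permutations), the probability that the minimum of `π` over a nonempty set `A`
equals the minimum of `π` over a nonempty set `B` is the Jaccard coefficient
`|A ∩ B| / |A ∪ B|`. -/
theorem minhash_collision_prob_eq_jaccard {n : ℕ} (hn : 1 ≤ n)
    (A B : Finset (Fin n)) (hA : A.Nonempty) (hB : B.Nonempty) :
    ((Finset.univ.filter (fun π : Equiv.Perm (Fin n) =>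
        (A.image π).min' (hA.image π) = (B.image π).min' (hB.image π))).card : ℚ) /
      (Nat.factorial n : ℚ)
    = ((A ∩ B).card : ℚ) / ((A ∪ B).card : ℚ) :=
  minhash_collision_prob_eq_jaccard_general A B hA hB
end

section
/- Let n ≥ 1, let A, B ⊆ Fin n be nonempty finite sets, and let π_1, …, π_m be m independent permutations of Fin n, each chosen uniformly at random. Then the probability that min_{a ∈ A} π_t(a) = min_{b ∈ B} π_t(b) holds simultaneously for all t = 1, …, m equals J(A,B)^m, where J(A,B) = |A ∩ B| / |A ∪ B| is the Jaccard coefficient. -/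
/-!
Fix `U = A ∪ B`. Every permutation `π` attains its minimum over `U` at exactly one point, and
precomposing with the transposition `(x y)` shows that each point of `U` is the argmin for the
same number of permutations, namely `n! / |U|`. The minhash values of `A` and `B` agree
exactly when the argmin over `U` lies in `A ∩ B`, so one permutation collides with
probability `|A ∩ B| / |U|`; for `m` independent permutations the probabilities multiply.
-/

open Finset Equiv

lemma Equiv.swap_apply_mem {α : Type*} [DecidableEq α] {U : Finset α} {x y z : α} (hx : x ∈ U)
    (hy : y ∈ U) (hz : z ∈ U) : swap x y z ∈ U := by
  rw [swap_apply_def]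
  split_ifs <;> assumption

namespace Equiv.Perm

variable {α : Type*} [Fintype α] [LinearOrder α]

def minAt (U : Finset α) (x : α) : Finset (Perm α) :=
  {π | ∀ z ∈ U, π x ≤ π z}

@[simp]
lemma mem_minAt {U : Finset α} {x : α} {π : Perm α} : π ∈ minAt U x ↔ ∀ z ∈ U, π x ≤ π z := by
  simp [minAt]

lemma card_minAt_eq {U : Finset α} {x y : α} (hx : x ∈ U) (hy : y ∈ U) :
    #(minAt U x) = #(minAt U y) := by
  refine card_equiv (Equiv.mulRight (swap x y)) fun π ↦ ?_
  simp only [mem_minAt, coe_mulRight, mul_apply, swap_apply_right]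
  refine ⟨fun h z hz ↦ h _ (swap_apply_mem hx hy hz), fun h z hz ↦ ?_⟩
  simpa using h _ (swap_apply_mem hx hy hz)

lemma pairwiseDisjoint_minAt (U : Finset α) : (U : Set α).PairwiseDisjoint (minAt U) := by
  intro x hx y hy hxy
  simp only [Function.onFun, disjoint_left, mem_minAt]
  exact fun π hπx hπy ↦ hxy (π.injective (le_antisymm (hπx y hy) (hπy x hx)))

lemma biUnion_minAt_eq_univ {U : Finset α} (hU : U.Nonempty) : U.biUnion (minAt U) = univ := by
  refine eq_univ_of_forall fun π ↦ ?_
  obtain ⟨x, hx, hmin⟩ := U.exists_min_image π hU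
  exact mem_biUnion.2 ⟨x, hx, mem_minAt.2 hmin⟩

lemma card_biUnion_minAt {U s : Finset α} (hs : s ⊆ U) {x : α} (hx : x ∈ U) :
    #(s.biUnion (minAt U)) = #s * #(minAt U x) := by
  rw [card_biUnion ((pairwiseDisjoint_minAt U).subset (by exact_mod_cast hs)),
    sum_congr rfl fun y hy ↦ card_minAt_eq (hs hy) hx, sum_const, smul_eq_mul]

lemma card_mul_card_minAt {U : Finset α} {x : α} (hx : x ∈ U) :
    #U * #(minAt U x) = (Fintype.card α).factorial := by
  rw [← card_biUnion_minAt subset_rfl hx, biUnion_minAt_eq_univ ⟨x, hx⟩, card_univ,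
    Fintype.card_perm]

lemma min'_image_eq_iff {A B : Finset α} (hA : A.Nonempty) (hB : B.Nonempty) (π : Perm α) :
    (A.image π).min' (hA.image π) = (B.image π).min' (hB.image π) ↔
      π ∈ (A ∩ B).biUnion (minAt (A ∪ B)) := by
  simp only [mem_biUnion, mem_inter, mem_minAt, mem_union]
  constructor
  · intro h
    obtain ⟨a, ha, hπa⟩ := mem_image.1 ((A.image π).min'_mem (hA.image π))
    obtain ⟨b, hb, hπb⟩ := mem_image.1 ((B.image π).min'_mem (hB.image π))
    obtain rfl : a = b := π.injective (by rw [hπa, hπb, h])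
    refine ⟨a, ⟨ha, hb⟩, fun z hz ↦ ?_⟩
    rcases hz with hz | hz
    · exact hπa ▸ min'_le _ _ (mem_image_of_mem π hz)
    · exact hπb ▸ min'_le _ _ (mem_image_of_mem π hz)
  · rintro ⟨x, ⟨hxA, hxB⟩, hmin⟩
    have hA' : (A.image π).min' (hA.image π) = π x :=
      le_antisymm (min'_le _ _ (mem_image_of_mem π hxA))
        (le_min' _ _ _ (by simpa using fun z hz ↦ hmin z (.inl hz)))
    have hB' : (B.image π).min' (hB.image π) = π x :=
      le_antisymm (min'_le _ _ (mem_image_of_mem π hxB))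
        (le_min' _ _ _ (by simpa using fun z hz ↦ hmin z (.inr hz)))
    rw [hA', hB']

lemma card_union_mul_card_min'_image_eq {A B : Finset α} (hA : A.Nonempty) (hB : B.Nonempty) :
    #(A ∪ B) * #{π : Perm α | (A.image π).min' (hA.image π) = (B.image π).min' (hB.image π)} =
      #(A ∩ B) * (Fintype.card α).factorial := by
  obtain ⟨x, hx⟩ := hA.mono (subset_union_left (s₂ := B))
  have hcollide : ({π : Perm α | (A.image π).min' (hA.image π) = (B.image π).min' (hB.image π)}
      : Finset _) = (A ∩ B).biUnion (minAt (A ∪ B)) := by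
    ext π
    simp [min'_image_eq_iff hA hB π]
  rw [hcollide, card_biUnion_minAt inter_subset_union hx, ← card_mul_card_minAt hx]
  ring

end Equiv.Perm

lemma filter_forall_apply_eq_piFinset {ι α : Type*} [Fintype ι] [DecidableEq ι] [Fintype α]
    (p : α → Prop) [DecidablePred p] [DecidablePred fun f : ι → α ↦ ∀ i, p (f i)] :
    ({f : ι → α | ∀ i, p (f i)} : Finset _) = Fintype.piFinset fun _ ↦ {a | p a} := by
  ext f
  simp

theorem minhash_band_collision_prob_eq_jaccard_pow_general {n : ℕ} (m : ℕ)
    (A B : Finset (Fin n)) (hA : A.Nonempty) (hB : B.Nonempty) :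
    ((Finset.univ.filter (fun π : Fin m → Equiv.Perm (Fin n) =>
        ∀ t : Fin m,
          (A.image (π t)).min' (hA.image (π t)) =
            (B.image (π t)).min' (hB.image (π t)))).card : ℚ) /
      ((Nat.factorial n : ℚ) ^ m)
    = (((A ∩ B).card : ℚ) / ((A ∪ B).card : ℚ)) ^ m := by
  have hU : (#(A ∪ B) : ℚ) ≠ 0 := by
    exact_mod_cast (card_pos.2 (hA.mono subset_union_left)).ne'
  have hsingle := Perm.card_union_mul_card_min'_image_eq hA hB
  rw [Fintype.card_fin] at hsingle
  rw [filter_forall_apply_eq_piFinset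
      fun π : Perm (Fin n) ↦ (A.image π).min' (hA.image π) = (B.image π).min' (hB.image π),
    Fintype.card_piFinset_const, Nat.cast_pow, ← div_pow]
  congr 1
  rw [div_eq_div_iff (by positivity) hU, mul_comm]
  exact_mod_cast hsingle

/-- For `m` independent uniformly random permutations `π 0, …, π (m-1)` of
`Fin n` (a uniformly random element of the product space), the probability
that the minhash values of nonempty sets `A` and `B` agree simultaneously for
all `m` permutations equals `J(A,B)^m`, where `J(A,B) = |A ∩ B| / |A ∪ B|` is
the Jaccard coefficient. -/
theorem minhash_band_collision_prob_eq_jaccard_pow {n : ℕ} (hn : 1 ≤ n) (m : ℕ)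
    (A B : Finset (Fin n)) (hA : A.Nonempty) (hB : B.Nonempty) :
    ((Finset.univ.filter (fun π : Fin m → Equiv.Perm (Fin n) =>
        ∀ t : Fin m,
          (A.image (π t)).min' (hA.image (π t)) =
            (B.image (π t)).min' (hB.image (π t)))).card : ℚ) /
      ((Nat.factorial n : ℚ) ^ m)
    = (((A ∩ B).card : ℚ) / ((A ∪ B).card : ℚ)) ^ m :=
  minhash_band_collision_prob_eq_jaccard_pow_general m A B hA hB
end

section
/- Let n ≥ 1, let A, B ⊆ Fin n be nonempty finite sets, and let π_1, …, π_m be m independent permutations of Fin n, each chosen uniformly at random. Then the expected value of the fraction (1/m) · |{ t : min_{a ∈ A} π_t(a) = min_{b ∈ B} π_t(b) }| equals the Jaccard coefficient J(A,B) = |A ∩ B| / |A ∪ B|; i.e., the fraction of agreeing minhash signature entries is an unbiased estimator of the Jaccard coefficient. -/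
open Finset Equiv

section aux
variable {n : ℕ} (A B : Finset (Fin n)) (hA : A.Nonempty) (hB : B.Nonempty)

/-- the element of A ∪ B attaining the minimum of σ over A ∪ B -/
noncomputable def amin (σ : Equiv.Perm (Fin n)) : Fin n :=
  σ.symm (((A ∪ B).image σ).min' ((hA.mono subset_union_left).image σ))

lemma amin_mem (σ : Equiv.Perm (Fin n)) : amin A B hA σ ∈ A ∪ B := by
  have h := Finset.min'_mem ((A ∪ B).image σ) ((hA.mono subset_union_left).image σ)
  rw [Finset.mem_image] at h
  obtain ⟨x, hx, hxe⟩ := h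
  unfold amin
  rw [← hxe, Equiv.symm_apply_apply]
  exact hx

lemma amin_eq_iff (σ : Equiv.Perm (Fin n)) (x : Fin n) :
    amin A B hA σ = x ↔
      ((A ∪ B).image σ).min' ((hA.mono subset_union_left).image σ) = σ x := by
  unfold amin
  constructor
  · intro h; rw [← h, Equiv.apply_symm_apply]
  · intro h; rw [h, Equiv.symm_apply_apply]

lemma min'_image_eq (C : Finset (Fin n)) (hC : C.Nonempty) (hCU : C ⊆ A ∪ B)
    (σ : Equiv.Perm (Fin n)) (hx : amin A B hA σ ∈ C) :
    (C.image σ).min' (hC.image σ) =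
      ((A ∪ B).image σ).min' ((hA.mono subset_union_left).image σ) := by
  apply le_antisymm
  · exact Finset.min'_le _ _ (by
      rw [Finset.mem_image]
      refine ⟨amin A B hA σ, hx, ?_⟩
      unfold amin; rw [Equiv.apply_symm_apply])
  · exact Finset.min'_le _ _ (Finset.image_subset_image hCU (Finset.min'_mem _ _))

lemma agree_iff (σ : Equiv.Perm (Fin n)) :
    ((A.image σ).min' (hA.image σ) = (B.image σ).min' (hB.image σ)) ↔
      amin A B hA σ ∈ A ∩ B := by
  constructor
  · intro h
    -- common value is the global min
    have hmin : ((A ∪ B).image σ).min' ((hA.mono subset_union_left).image σ) =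
        (A.image σ).min' (hA.image σ) := by
      apply le_antisymm
      · exact Finset.min'_le _ _
          (Finset.image_subset_image subset_union_left (Finset.min'_mem _ _))
      · have hg := Finset.min'_mem ((A ∪ B).image σ) ((hA.mono subset_union_left).image σ)
        rw [Finset.mem_image] at hg
        obtain ⟨w, hw, hwe⟩ := hg
        rw [Finset.mem_union] at hw
        rcases hw with hw | hw
        · exact hwe ▸ Finset.min'_le _ _ (Finset.mem_image_of_mem _ hw)
        · rw [h]; exact hwe ▸ Finset.min'_le _ _ (Finset.mem_image_of_mem _ hw)
    rw [Finset.mem_inter]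
    constructor
    · have : σ (amin A B hA σ) ∈ A.image σ := by
        rw [show σ (amin A B hA σ) =
            ((A ∪ B).image σ).min' ((hA.mono subset_union_left).image σ) from
          (Equiv.apply_symm_apply σ _), hmin]
        exact Finset.min'_mem _ _
      rw [Finset.mem_image] at this
      obtain ⟨a, ha, hae⟩ := this
      rwa [← σ.injective hae]
    · have : σ (amin A B hA σ) ∈ B.image σ := by
        rw [show σ (amin A B hA σ) =
            ((A ∪ B).image σ).min' ((hA.mono subset_union_left).image σ) from
          (Equiv.apply_symm_apply σ _), hmin, h]
        exact Finset.min'_mem _ _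
      rw [Finset.mem_image] at this
      obtain ⟨a, ha, hae⟩ := this
      rwa [← σ.injective hae]
  · intro h
    rw [Finset.mem_inter] at h
    rw [min'_image_eq A B hA A hA subset_union_left σ h.1,
        min'_image_eq A B hA B hB subset_union_right σ h.2]

lemma image_swap_union {x y : Fin n} (hx : x ∈ A ∪ B) (hy : y ∈ A ∪ B) :
    (A ∪ B).image (Equiv.swap x y) = A ∪ B := by
  apply Finset.eq_of_subset_of_card_le
  · intro z hz
    rw [Finset.mem_image] at hz
    obtain ⟨w, hw, hwe⟩ := hz
    rw [← hwe, Equiv.swap_apply_def]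
    split_ifs <;> assumption
  · rw [Finset.card_image_of_injective _ (Equiv.swap x y).injective]

/-- fibers of amin over A ∪ B all have the same cardinality -/
lemma fiber_card_eq {x y : Fin n} (hx : x ∈ A ∪ B) (hy : y ∈ A ∪ B) :
    (Finset.univ.filter (fun σ : Equiv.Perm (Fin n) => amin A B hA σ = x)).card =
    (Finset.univ.filter (fun σ : Equiv.Perm (Fin n) => amin A B hA σ = y)).card := by
  apply Finset.card_bij' (fun σ _ => σ * Equiv.swap x y) (fun σ _ => σ * Equiv.swap x y)
  · intro σ hσ
    rw [Finset.mem_filter] at hσ ⊢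
    refine ⟨Finset.mem_univ _, ?_⟩
    rw [amin_eq_iff]
    have him : (A ∪ B).image ⇑(σ * Equiv.swap x y) = (A ∪ B).image σ := by
      rw [show ⇑(σ * Equiv.swap x y) = ⇑σ ∘ ⇑(Equiv.swap x y) from rfl,
        ← Finset.image_image, image_swap_union A B hx hy]
    have h2 := (amin_eq_iff A B hA σ x).mp hσ.2
    have : ((A ∪ B).image ⇑(σ * Equiv.swap x y)).min'
        ((hA.mono subset_union_left).image _) =
        ((A ∪ B).image σ).min' ((hA.mono subset_union_left).image σ) := by
      congr 1
    rw [this, h2]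
    simp [Equiv.Perm.mul_apply]
  · intro σ hσ
    rw [Finset.mem_filter] at hσ ⊢
    refine ⟨Finset.mem_univ _, ?_⟩
    rw [amin_eq_iff]
    have him : (A ∪ B).image ⇑(σ * Equiv.swap x y) = (A ∪ B).image σ := by
      rw [show ⇑(σ * Equiv.swap x y) = ⇑σ ∘ ⇑(Equiv.swap x y) from rfl,
        ← Finset.image_image, image_swap_union A B hx hy]
    have h2 := (amin_eq_iff A B hA σ y).mp hσ.2
    have : ((A ∪ B).image ⇑(σ * Equiv.swap x y)).min'
        ((hA.mono subset_union_left).image _) =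
        ((A ∪ B).image σ).min' ((hA.mono subset_union_left).image σ) := by
      congr 1
    rw [this, h2]
    simp [Equiv.Perm.mul_apply, Equiv.swap_apply_right]
  · intro σ _; rw [mul_assoc]; simp
  · intro σ _; rw [mul_assoc]; simp

/-- the key single-permutation counting identity -/
lemma key_count :
    (Finset.univ.filter (fun σ : Equiv.Perm (Fin n) =>
        (A.image σ).min' (hA.image σ) = (B.image σ).min' (hB.image σ))).card
      * (A ∪ B).card
    = (A ∩ B).card * n.factorial := by
  classical
  set F : Fin n → ℕ := fun x =>
    (Finset.univ.filter (fun σ : Equiv.Perm (Fin n) => amin A B hA σ = x)).card with hF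
  obtain ⟨x₀, hx₀⟩ := id hA
  have hx₀U : x₀ ∈ A ∪ B := Finset.mem_union_left _ hx₀
  have hconst : ∀ x ∈ A ∪ B, F x = F x₀ := fun x hx => fiber_card_eq A B hA hx hx₀U
  -- total count
  have htotal : (A ∪ B).card * F x₀ = n.factorial := by
    have := Finset.card_eq_sum_card_fiberwise
      (fun σ (_ : σ ∈ (Finset.univ : Finset (Equiv.Perm (Fin n)))) => amin_mem A B hA σ)
    rw [Finset.sum_congr rfl (fun x hx => hconst x hx), Finset.sum_const, smul_eq_mul] at this
    rw [← this, Finset.card_univ, Fintype.card_perm, Fintype.card_fin]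
  -- agreement count
  have hagree : (Finset.univ.filter (fun σ : Equiv.Perm (Fin n) =>
        (A.image σ).min' (hA.image σ) = (B.image σ).min' (hB.image σ))).card
      = (A ∩ B).card * F x₀ := by
    have hsub : ∀ σ ∈ (Finset.univ.filter (fun σ : Equiv.Perm (Fin n) =>
        (A.image σ).min' (hA.image σ) = (B.image σ).min' (hB.image σ))),
        amin A B hA σ ∈ A ∩ B := by
      intro σ hσ
      rw [Finset.mem_filter] at hσ
      exact (agree_iff A B hA hB σ).mp hσ.2
    have := Finset.card_eq_sum_card_fiberwise hsub
    rw [this]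
    have : ∀ x ∈ A ∩ B,
        ((Finset.univ.filter (fun σ : Equiv.Perm (Fin n) =>
          (A.image σ).min' (hA.image σ) = (B.image σ).min' (hB.image σ))).filter
          (fun σ => amin A B hA σ = x)).card = F x₀ := by
      intro x hx
      rw [← hconst x (Finset.mem_union_left _ (Finset.mem_inter.mp hx).1)]
      rw [hF, Finset.filter_filter]
      change _ = #(Finset.filter (fun σ : Equiv.Perm (Fin n) => amin A B hA σ = x) Finset.univ)
      congr 1
      apply Finset.filter_congr
      intro σ _
      simp only [and_iff_right_iff_imp]
      intro hax
      exact (agree_iff A B hA hB σ).mpr (hax ▸ hx)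
    rw [Finset.sum_congr rfl this, Finset.sum_const, smul_eq_mul]
  rw [hagree, mul_assoc, mul_comm (F x₀), ← mul_assoc, mul_assoc, htotal]

end aux

/-- For `m ≥ 1` independent uniformly random permutations of `Fin n`, the
expected fraction of agreeing minhash signature entries of two nonempty sets
`A` and `B` equals their Jaccard coefficient `|A ∩ B| / |A ∪ B|`; i.e., the
fraction of agreeing entries is an unbiased estimator of the Jaccard
coefficient. -/
theorem minhash_signature_agreement_unbiased {n : ℕ} (hn : 1 ≤ n)
    {m : ℕ} (hm : 1 ≤ m)
    (A B : Finset (Fin n)) (hA : A.Nonempty) (hB : B.Nonempty) :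
    (∑ π : Fin m → Equiv.Perm (Fin n),
        ((Finset.univ.filter (fun t : Fin m =>
            (A.image (π t)).min' (hA.image (π t)) =
              (B.image (π t)).min' (hB.image (π t)))).card : ℚ) / (m : ℚ)) /
      ((Nat.factorial n : ℚ) ^ m)
    = ((A ∩ B).card : ℚ) / ((A ∪ B).card : ℚ) := by
  classical
  obtain ⟨m', rfl⟩ : ∃ m', m = m' + 1 := ⟨m - 1, (Nat.succ_pred_eq_of_pos hm).symm⟩
  set N := n.factorial with hNdef
  set S := (Finset.univ.filter (fun σ : Equiv.Perm (Fin n) =>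
      (A.image σ).min' (hA.image σ) = (B.image σ).min' (hB.image σ))).card with hSdef
  have hkey := key_count A B hA hB
  -- the total count over all signature vectors
  have hT : (∑ π : Fin (m' + 1) → Equiv.Perm (Fin n),
      (Finset.univ.filter (fun t : Fin (m' + 1) =>
        (A.image (π t)).min' (hA.image (π t)) =
          (B.image (π t)).min' (hB.image (π t)))).card)
      = (m' + 1) * (N ^ m' * S) := by
    have hstep : ∀ t : Fin (m' + 1),
        (∑ π : Fin (m' + 1) → Equiv.Perm (Fin n),
          if (A.image (π t)).min' (hA.image (π t)) =
              (B.image (π t)).min' (hB.image (π t)) then 1 else 0)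
        = N ^ m' * S := by
      intro t
      have e := Equiv.funSplitAt t (Equiv.Perm (Fin n))
      have h1 : (∑ π : Fin (m' + 1) → Equiv.Perm (Fin n),
            if (A.image (π t)).min' (hA.image (π t)) =
                (B.image (π t)).min' (hB.image (π t)) then 1 else 0)
          = ∑ p : Equiv.Perm (Fin n) × ({ j : Fin (m' + 1) // j ≠ t } → Equiv.Perm (Fin n)),
            if (A.image p.1).min' (hA.image p.1) =
                (B.image p.1).min' (hB.image p.1) then 1 else 0 :=
        Fintype.sum_equiv (Equiv.funSplitAt t (Equiv.Perm (Fin n))) _ _ (fun π => rfl)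
      rw [h1, Fintype.sum_prod_type]
      have hcard : Fintype.card ({ j : Fin (m' + 1) // j ≠ t } → Equiv.Perm (Fin n))
          = N ^ m' := by
        rw [Fintype.card_fun, Fintype.card_perm, Fintype.card_fin,
          Fintype.card_subtype_compl, Fintype.card_subtype_eq, Fintype.card_fin,
          Nat.add_sub_cancel]
      have hinner : ∀ σ : Equiv.Perm (Fin n),
          (∑ _g : { j : Fin (m' + 1) // j ≠ t } → Equiv.Perm (Fin n),
            if (A.image σ).min' (hA.image σ) = (B.image σ).min' (hB.image σ) then 1 else 0)
          = N ^ m' * (if (A.image σ).min' (hA.image σ) =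
              (B.image σ).min' (hB.image σ) then 1 else 0) := by
        intro σ
        rw [Finset.sum_const, Finset.card_univ, hcard, smul_eq_mul]
      rw [Finset.sum_congr rfl (fun σ _ => hinner σ), ← Finset.mul_sum]
      congr 1
      rw [hSdef, Finset.card_filter]
    calc (∑ π : Fin (m' + 1) → Equiv.Perm (Fin n),
          (Finset.univ.filter (fun t : Fin (m' + 1) =>
            (A.image (π t)).min' (hA.image (π t)) =
              (B.image (π t)).min' (hB.image (π t)))).card)
        = ∑ π : Fin (m' + 1) → Equiv.Perm (Fin n), ∑ t : Fin (m' + 1),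
            if (A.image (π t)).min' (hA.image (π t)) =
                (B.image (π t)).min' (hB.image (π t)) then 1 else 0 :=
          Finset.sum_congr rfl (fun π _ => Finset.card_filter _ _)
      _ = ∑ t : Fin (m' + 1), ∑ π : Fin (m' + 1) → Equiv.Perm (Fin n),
            if (A.image (π t)).min' (hA.image (π t)) =
                (B.image (π t)).min' (hB.image (π t)) then 1 else 0 :=
          Finset.sum_comm
      _ = ∑ _t : Fin (m' + 1), N ^ m' * S := Finset.sum_congr rfl (fun t _ => hstep t)
      _ = (m' + 1) * (N ^ m' * S) := by
          rw [Finset.sum_const, Finset.card_univ, Fintype.card_fin, smul_eq_mul]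
  rw [← Finset.sum_div, ← Nat.cast_sum, hT]
  have hN : (N : ℚ) ≠ 0 := Nat.cast_ne_zero.mpr (Nat.factorial_ne_zero n)
  have hk : ((A ∪ B).card : ℚ) ≠ 0 :=
    Nat.cast_ne_zero.mpr (Finset.card_ne_zero_of_mem
      (Finset.mem_union_left _ hA.choose_spec))
  have hm0 : ((m' : ℚ) + 1) ≠ 0 := by positivity
  have hkeyQ : (S : ℚ) * (A ∪ B).card = (A ∩ B).card * N := by
    exact_mod_cast congrArg (Nat.cast : ℕ → ℚ) hkey
  push_cast
  rw [mul_div_cancel_left₀ _ hm0,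
    div_eq_div_iff (by positivity) hk]
  rw [pow_succ]
  linear_combination ((N : ℚ) ^ m') * hkeyQ
end
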